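/- arXiv:2105.01135 — 2 statements merged into one kernel-verified Lean document; each statement's English description precedes it below -/
import Mathlib

section
/- In a normal band B, for u, v ∈ aBb, the inclusion of principal left ideals Bu ⊆ Bv holds if and only if u ≤ v in the natural partial order. -/
theorem stmt_4 (B : Type*) [Semigroup B] (idem : ∀ a : B, a * a = a)
    (norm : ∀ a b c : B, a * b * c * a = a * c * b * a) (a b u v : B)
    (hu : a * u * b = u) (hv : a * v * b = v) :
    ({y : B | ∃ z : B, z * u = y} ⊆ {y : B | ∃ z : B, z * v = y}) ↔
    (u * v = u ∧ v * u = u) := by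
  have h3 : ∀ p t : B, p * (p * t) = p * t := fun p t => by rw [← mul_assoc, idem]
  have h1 : ∀ p q r t : B, p * (q * (r * (p * t))) = p * (r * (q * (p * t))) := by
    intro p q r t
    have h := congrArg (· * t) (norm p q r)
    simp only [mul_assoc] at h
    simpa using h
  have h2 : ∀ p q r : B, p * (q * (r * p)) = p * (r * (q * p)) := by
    intro p q r
    have h := norm p q r
    simp only [mul_assoc] at h
    exact h
  have medial : ∀ p x y q : B, p * x * y * q = p * y * x * q := by
    have L1' : ∀ p q x y : B, p * (x * (y * q)) = p * (q * (x * (y * (p * q)))) := by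
      intro p q x y
      conv_lhs => rw [← idem (p * (x * (y * q)))]
      simp only [mul_assoc]
      have s2 := h2 q p (x * y)
      simp only [mul_assoc] at s2
      rw [s2]
      have s3 := h1 p (x * y * q) (x * y) q
      simp only [mul_assoc] at s3
      rw [s3]
      have s4 := h3 (x * y) (q * (p * q))
      simp only [mul_assoc] at s4
      rw [s4]
      have s5 := h1 p (x * y) q q
      simp only [mul_assoc] at s5
      rw [s5]
    intro p x y q
    simp only [mul_assoc]
    rw [L1' p q x y, L1' p q y x]
    have h := h2 (p * q) x y
    simp only [mul_assoc] at h
    exact h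
  constructor
  · intro hsub
    obtain ⟨z, hz⟩ := hsub ⟨u, idem u⟩
    have huv : u * v = u := by rw [← hz, mul_assoc, idem]
    have au : a * u = u := by
      conv_lhs => rw [← hu]
      rw [← mul_assoc, ← mul_assoc, idem, hu]
    have av : a * v = v := by
      conv_lhs => rw [← hv]
      rw [← mul_assoc, ← mul_assoc, idem, hv]
    have te : u * (v * u) = u := by rw [← mul_assoc, huv, idem]
    have et : (v * u) * u = v * u := by rw [mul_assoc, idem]
    have ae : a * (v * u) = v * u := by rw [← mul_assoc, av]
    have h4 : a * u * (v * u) * (v * u) = a * u * (v * u) := by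
      rw [mul_assoc (a * u) (v * u) (v * u), idem]
    have chain : a * u * (v * u) = v * u := by
      calc a * u * (v * u) = a * u * (v * u) * (v * u) := h4.symm
        _ = a * (v * u) * u * (v * u) := medial a u (v * u) (v * u)
        _ = v * u := by rw [ae, et, idem]
    have fin : a * u * (v * u) = u := by rw [au, te]
    exact ⟨huv, chain.symm.trans fin⟩
  · rintro ⟨huv, hvu⟩ y ⟨z, hz⟩
    exact ⟨z * u, by rw [mul_assoc, huv, hz]⟩
end

section
/- In a normal band B, for any a, b ∈ B with u ∈ aBb (i.e., u = a*u*b), we have u ≤ a*b in the natural partial order, and moreover if u is such that every element of aBb is ≤ u and u ∈ aBb, then u = a*b. -/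
theorem stmt_6 (B : Type*) [Semigroup B] (idem : ∀ a : B, a * a = a)
    (norm : ∀ a b c : B, a * b * c * a = a * c * b * a) (a b : B) :
    (∀ u : B, a * u * b = u → u * (a * b) = u ∧ (a * b) * u = u) ∧
    (∀ u : B, a * u * b = u →
      (∀ x : B, a * x * b = x → x * u = x ∧ u * x = x) → u = a * b) := by
  have key : ∀ u : B, a * u * b = u → u * (a * b) = u ∧ (a * b) * u = u := by
    intro u hu
    have hub : u * b = u := by
      conv_lhs => rw [← hu]
      calc a * u * b * b = a * (u * (b * b)) := by simp only [mul_assoc]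
        _ = a * (u * b) := by rw [idem b]
        _ = a * u * b := by rw [mul_assoc]
        _ = u := hu
    have h1 : u * a = a * b * u * a := by
      conv_lhs => rw [← hu]
      exact norm a u b
    have hcomm : u * (a * b) = a * b * u :=
      calc u * (a * b) = u * a * b := (mul_assoc u a b).symm
        _ = a * b * u * a * b := by rw [h1]
        _ = a * (b * u * a * b) := by simp only [mul_assoc]
        _ = a * (b * a * u * b) := by rw [norm b u a]
        _ = a * b * (a * u * b) := by simp only [mul_assoc]
        _ = a * b * u := by rw [hu]
    have h4 : u = a * (u * (a * b) * u) * b :=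
      calc u = u * u := (idem u).symm
        _ = (a * u * b) * (a * u * b) := by rw [hu]
        _ = a * (u * b * a * u) * b := by simp only [mul_assoc]
        _ = a * (u * a * b * u) * b := by rw [norm u b a]
        _ = a * (u * (a * b) * u) * b := by rw [mul_assoc u a b]
    have h5 : a * b * u = u := by
      symm
      calc u = a * (u * (a * b) * u) * b := h4
        _ = a * (a * b * u * u) * b := by rw [hcomm]
        _ = a * (a * b * (u * u)) * b := by rw [mul_assoc (a * b) u u]
        _ = a * (a * b * u) * b := by rw [idem u]
        _ = a * a * b * u * b := by simp only [← mul_assoc]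
        _ = a * b * u * b := by rw [idem a]
        _ = a * b * (u * b) := by rw [mul_assoc (a * b) u b]
        _ = a * b * u := by rw [hub]
    exact ⟨hcomm.trans h5, h5⟩
  refine ⟨key, fun u hu hmax => ?_⟩
  have hab : a * (a * b) * b = a * b := by
    calc a * (a * b) * b = a * a * b * b := by simp only [← mul_assoc]
      _ = a * (b * b) := by rw [idem a, mul_assoc]
      _ = a * b := by rw [idem b]
  have h1 := (hmax (a * b) hab).1
  have h2 := (key u hu).2
  rw [h1] at h2
  exact h2.symm
end
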